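/- Fix a nonzero real constant c₁ and C² real functions γ(t) and f₀(t) with f₀ never zero. Define f(ζ,t) = f₀(t)/(γ(t) - e^{c₁ ζ}) on the region where γ(t) - e^{c₁ζ} ≠ 0. Then f satisfies f_{ζζ} f - 2 f_ζ² - c₁ f_ζ f = 0 identically. -/

import Mathlib

theorem stmt9 (c₁ : ℝ) (hc₁ : c₁ ≠ 0) (γ f₀ : ℝ → ℝ)
    (hγ : ContDiff ℝ 2 γ) (hf₀ : ContDiff ℝ 2 f₀) (hf₀ne : ∀ t, f₀ t ≠ 0) :
    ∀ ζ t : ℝ, γ t - Real.exp (c₁ * ζ) ≠ 0 →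
      (deriv (deriv (fun s => f₀ t / (γ t - Real.exp (c₁ * s)))) ζ) *
            (f₀ t / (γ t - Real.exp (c₁ * ζ))) -
          2 * (deriv (fun s => f₀ t / (γ t - Real.exp (c₁ * s))) ζ) ^ 2 -
        c₁ * (deriv (fun s => f₀ t / (γ t - Real.exp (c₁ * s))) ζ) *
          (f₀ t / (γ t - Real.exp (c₁ * ζ))) = 0 := by
  intro ζ t hne
  set a := f₀ t with ha
  set b := γ t with hb
  have he : ∀ s : ℝ, HasDerivAt (fun s => Real.exp (c₁ * s))
      (c₁ * Real.exp (c₁ * s)) s := by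
    intro s
    have h1 : HasDerivAt (fun s : ℝ => c₁ * s) c₁ s := by
      simpa using (hasDerivAt_id s).const_mul c₁
    exact ((Real.hasDerivAt_exp (c₁ * s)).comp s h1).congr_deriv (mul_comm _ _)
  have hu : ∀ s : ℝ, HasDerivAt (fun s => b - Real.exp (c₁ * s))
      (-(c₁ * Real.exp (c₁ * s))) s := fun s => by
    exact ((hasDerivAt_const s b).sub (he s)).congr_deriv (zero_sub _)
  have hder : ∀ s : ℝ, b - Real.exp (c₁ * s) ≠ 0 →
      HasDerivAt (fun s => a / (b - Real.exp (c₁ * s)))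
        (a * (c₁ * Real.exp (c₁ * s)) / (b - Real.exp (c₁ * s)) ^ 2) s := by
    intro s hs
    have := (hasDerivAt_const s a).div (hu s) hs
    refine this.congr_deriv ?_
    ring
  have hU : ∀ᶠ s in nhds ζ, b - Real.exp (c₁ * s) ≠ 0 := by
    have hcont : Continuous fun s => b - Real.exp (c₁ * s) := by continuity
    exact hcont.continuousAt.eventually_ne hne
  have hfd : deriv (fun s => a / (b - Real.exp (c₁ * s))) =ᶠ[nhds ζ]
      fun s => a * (c₁ * Real.exp (c₁ * s)) / (b - Real.exp (c₁ * s)) ^ 2 :=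
    hU.mono fun s hs => (hder s hs).deriv
  have hd1 : deriv (fun s => a / (b - Real.exp (c₁ * s))) ζ
      = a * (c₁ * Real.exp (c₁ * ζ)) / (b - Real.exp (c₁ * ζ)) ^ 2 :=
    (hder ζ hne).deriv
  -- second derivative
  have hg : HasDerivAt (fun s => a * (c₁ * Real.exp (c₁ * s)) / (b - Real.exp (c₁ * s)) ^ 2)
      (a * c₁ ^ 2 * Real.exp (c₁ * ζ) *
        ((b - Real.exp (c₁ * ζ)) + 2 * Real.exp (c₁ * ζ)) /
        (b - Real.exp (c₁ * ζ)) ^ 3) ζ := by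
    have hnum : HasDerivAt (fun s => a * (c₁ * Real.exp (c₁ * s)))
        (a * (c₁ * (c₁ * Real.exp (c₁ * ζ)))) ζ := ((he ζ).const_mul c₁).const_mul a
    have hden : HasDerivAt (fun s => (b - Real.exp (c₁ * s)) ^ 2)
        (2 * (b - Real.exp (c₁ * ζ)) * (-(c₁ * Real.exp (c₁ * ζ)))) ζ := by
      exact ((hu ζ).pow 2).congr_deriv (by norm_num)
    have hden2 : (b - Real.exp (c₁ * ζ)) ^ 2 ≠ 0 := pow_ne_zero _ hne
    have := hnum.div hden hden2
    refine this.congr_deriv ?_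
    rw [div_eq_div_iff (pow_ne_zero 2 hden2) (pow_ne_zero 3 hne)]
    ring
  have hd2 : deriv (deriv (fun s => a / (b - Real.exp (c₁ * s)))) ζ
      = a * c₁ ^ 2 * Real.exp (c₁ * ζ) *
        ((b - Real.exp (c₁ * ζ)) + 2 * Real.exp (c₁ * ζ)) /
        (b - Real.exp (c₁ * ζ)) ^ 3 := by
    rw [hfd.deriv_eq]
    exact hg.deriv
  rw [hd1, hd2]
  field_simp
  ring
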